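/- arXiv:2107.10416 — 3 statements merged into one kernel-verified Lean document; each statement's English description precedes it below -/
import Mathlib

section
/- Let Γ be the set of finite subsets of ℕ and define λ_σ = ∏_{k∈σ}(1+k) (with λ_∅ = 1). Then for every real r > 1, the series ∑_{σ∈Γ} λ_σ^{-r} converges and satisfies ∑_{σ∈Γ} λ_σ^{-r} ≤ exp(∑_{n=1}^∞ n^{-r}). -/
/-!
Since `λ_σ^{-r} = ∏_{k∈σ} (k+1)^{-r}` is multiplicative in `σ`, the finite subsets of any finite
`S ⊆ ℕ` contribute `∏_{k∈S} (1 + (k+1)^{-r}) ≤ exp (∑_{k∈S} (k+1)^{-r})` to the series. These partial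
sums are therefore bounded by `exp (∑_n (n+1)^{-r})`, which is finite for `r > 1`.
-/

open scoped BigOperators

/-- `lam σ = ∏_{k∈σ} (1+k)`, with `lam ∅ = 1`. -/
noncomputable def lam (σ : Finset ℕ) : ℝ := ∏ k ∈ σ, (1 + k : ℝ)

theorem Real.sum_finsetProd_le_exp_tsum {ι : Type*} {f : ι → ℝ} (hf : ∀ i, 0 ≤ f i)
    (hfs : Summable f) (T : Finset (Finset ι)) :
    ∑ s ∈ T, ∏ i ∈ s, f i ≤ Real.exp (∑' i, f i) := by
  classical
  calc ∑ s ∈ T, ∏ i ∈ s, f i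
      ≤ ∑ s ∈ (T.biUnion id).powerset, ∏ i ∈ s, f i :=
        Finset.sum_le_sum_of_subset_of_nonneg
          (fun s hs ↦ Finset.mem_powerset.mpr (Finset.subset_biUnion_of_mem id hs))
          (fun s _ _ ↦ Finset.prod_nonneg fun i _ ↦ hf i)
    _ = ∏ i ∈ T.biUnion id, (1 + f i) := (Finset.prod_one_add _).symm
    _ ≤ Real.exp (∑ i ∈ T.biUnion id, f i) := Real.prod_one_add_le_exp_sum _ hf
    _ ≤ Real.exp (∑' i, f i) := Real.exp_le_exp.mpr (hfs.sum_le_tsum _ fun i _ ↦ hf i)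

theorem Real.tsum_finsetProd_le_exp_tsum {ι : Type*} {f : ι → ℝ} (hf : ∀ i, 0 ≤ f i)
    (hfs : Summable f) : ∑' s : Finset ι, ∏ i ∈ s, f i ≤ Real.exp (∑' i, f i) :=
  (summable_finsetProd_of_summable_nonneg hf hfs).tsum_le_of_sum_le
    (Real.sum_finsetProd_le_exp_tsum hf hfs)

theorem lam_rpow (σ : Finset ℕ) (r : ℝ) : lam σ ^ r = ∏ k ∈ σ, ((k : ℝ) + 1) ^ r := by
  rw [lam, ← Real.finsetProd_rpow σ _ (fun k _ ↦ by positivity)]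
  simp only [add_comm]

theorem summable_nat_add_one_rpow_neg {r : ℝ} (hr : 1 < r) :
    Summable fun n : ℕ ↦ ((n : ℝ) + 1) ^ (-r) := by
  have h := (summable_nat_add_iff 1).mpr (Real.summable_nat_rpow.mpr (neg_lt_neg hr))
  exact h.congr fun n ↦ by push_cast; rfl

/-- For every real `r > 1`, the series `∑_{σ∈Γ} λ_σ^{-r}` over the finite power set `Γ`
of `ℕ` converges, and its sum is at most `exp (∑_{n=1}^∞ n^{-r})`. -/
theorem stmt0 (r : ℝ) (hr : 1 < r) :
    Summable (fun σ : Finset ℕ => lam σ ^ (-r)) ∧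
    (∑' σ : Finset ℕ, lam σ ^ (-r)) ≤ Real.exp (∑' n : ℕ, ((n : ℝ) + 1) ^ (-r)) := by
  have hpos : ∀ n : ℕ, 0 ≤ ((n : ℝ) + 1) ^ (-r) := fun n ↦ by positivity
  have hsum := summable_nat_add_one_rpow_neg hr
  simp only [lam_rpow]
  exact ⟨summable_finsetProd_of_summable_nonneg hpos hsum,
    Real.tsum_finsetProd_le_exp_tsum hpos hsum⟩
end

section
/- Let π be an S-smooth spectral measure on the Bernoulli space (Σ, 𝒜, μ) with numerical densities φ^π_{σ,τ} ∈ L²(μ) satisfying ⟨π(E)Z_σ, Z_τ⟩ = ∫_E φ^π_{σ,τ} dμ for all measurable E. Then for every n ≥ 0 and every ξ ∈ L²(μ), the function ∑_{σ,τ∈Γ_n} conj(⟨Z_σ,ξ⟩)·⟨Z_τ,ξ⟩·φ^π_{σ,τ} is nonnegative μ-almost everywhere on Σ, where Γ_n is the set of subsets of {0,…,n}. -/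
open scoped BigOperators ComplexOrder
open MeasureTheory

/-!
`E ↦ ⟪π(E) u, u⟫` is a positive measure, since each `π(E)` is an orthogonal projection.
For `u = ∑_{σ ∈ Γ_n} ⟪Z_σ, ξ⟫ Z_σ` sesquilinearity expands `⟪π(E) u, u⟫` into the set integral
over `E` of the function in question, so that function has nonnegative integral over every
measurable set and is therefore nonnegative almost everywhere.
-/

/-- A spectral measure on a measurable space `(Ω, 𝒜)` with values in the orthogonal
projections of a complex Hilbert space `H`. -/
structure SpectralMeasure (Ω : Type*) [MeasurableSpace Ω]
    (H : Type*) [NormedAddCommGroup H] [InnerProductSpace ℂ H] [CompleteSpace H] where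
  toFun : Set Ω → (H →L[ℂ] H)
  selfAdjoint : ∀ E : Set Ω, MeasurableSet E → IsSelfAdjoint (toFun E)
  idem : ∀ E : Set Ω, MeasurableSet E → (toFun E).comp (toFun E) = toFun E
  map_univ : toFun Set.univ = ContinuousLinearMap.id ℂ H
  countably_additive : ∀ E : ℕ → Set Ω, (∀ n, MeasurableSet (E n)) →
    Pairwise (Function.onFun Disjoint E) →
    ∀ x : H, HasSum (fun n => toFun (E n) x) (toFun (⋃ n, E n) x)

theorem inner_map_sum_smul_sum_smul {ι H : Type*} [NormedAddCommGroup H]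
    [InnerProductSpace ℂ H] (T : H →L[ℂ] H) (s : Finset ι) (c : ι → ℂ) (v : ι → H) :
    inner ℂ (T (∑ i ∈ s, c i • v i)) (∑ j ∈ s, c j • v j) =
      ∑ i ∈ s, ∑ j ∈ s, starRingEnd ℂ (c i) * c j * inner ℂ (T (v i)) (v j) := by
  simp only [map_sum, map_smul, sum_inner, inner_sum, inner_smul_left, inner_smul_right,
    Finset.mul_sum]
  rw [Finset.sum_comm]
  exact Finset.sum_congr rfl fun _ _ => Finset.sum_congr rfl fun _ _ => by ring

theorem SpectralMeasure.inner_apply_self_nonneg {Ω H : Type*} [MeasurableSpace Ω]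
    [NormedAddCommGroup H] [InnerProductSpace ℂ H] [CompleteSpace H]
    (π : SpectralMeasure Ω H) {E : Set Ω} (hE : MeasurableSet E) (u : H) :
    0 ≤ inner ℂ (π.toFun E u) u :=
  ((ContinuousLinearMap.IsIdempotentElem.isPositive_iff_isSelfAdjoint (π.idem E hE)).mpr
    (π.selfAdjoint E hE)).inner_nonneg_left u

namespace MeasureTheory

variable {α : Type*} [MeasurableSpace α] {μ : Measure α} {f : α → ℂ}

theorem Integrable.ae_nonneg_of_forall_setIntegral_nonneg_complex (hf : Integrable f μ)
    (hf_nonneg : ∀ s, MeasurableSet s → 0 ≤ ∫ x in s, f x ∂μ) : ∀ᵐ x ∂μ, 0 ≤ f x := by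
  have hre : 0 ≤ᵐ[μ] fun x => (f x).re :=
    ae_nonneg_of_forall_setIntegral_nonneg hf.re fun s hs _ => by
      show 0 ≤ ∫ x in s, RCLike.re (f x) ∂μ
      rw [integral_re hf.integrableOn]
      exact (Complex.nonneg_iff.mp (hf_nonneg s hs)).1
  have him : (fun x => (f x).im) =ᵐ[μ] 0 :=
    hf.im.ae_eq_zero_of_forall_setIntegral_eq_zero fun s hs _ => by
      rw [integral_im hf.integrableOn]
      exact (Complex.nonneg_iff.mp (hf_nonneg s hs)).2.symm
  filter_upwards [hre, him] with x hx_re hx_im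
  exact Complex.nonneg_iff.mpr ⟨hx_re, hx_im.symm⟩

end MeasureTheory

theorem stmt9_general {Ω : Type*} [MeasurableSpace Ω] (μ : Measure Ω)
    (π : SpectralMeasure Ω (Lp ℂ 2 μ))
    (Z : Finset ℕ → Lp ℂ 2 μ)
    (φ : Finset ℕ → Finset ℕ → Ω → ℂ)
    (hφint : ∀ σ τ : Finset ℕ, Integrable (φ σ τ) μ)
    (hφ : ∀ (σ τ : Finset ℕ) (E : Set Ω), MeasurableSet E →
      (inner ℂ (π.toFun E (Z σ)) (Z τ) : ℂ) = ∫ ω in E, φ σ τ ω ∂μ)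
    (n : ℕ) (ξ : Lp ℂ 2 μ) :
    ∀ᵐ ω ∂μ, 0 ≤ ∑ σ ∈ (Finset.range (n + 1)).powerset,
        ∑ τ ∈ (Finset.range (n + 1)).powerset,
          (starRingEnd ℂ) (inner ℂ (Z σ) ξ : ℂ) * (inner ℂ (Z τ) ξ : ℂ) * φ σ τ ω := by
  set Γ := (Finset.range (n + 1)).powerset
  set c : Finset ℕ → ℂ := fun σ => inner ℂ (Z σ) ξ
  have hint : ∀ σ τ, Integrable (fun ω => starRingEnd ℂ (c σ) * c τ * φ σ τ ω) μ :=
    fun σ τ => (hφint σ τ).const_mul _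
  refine Integrable.ae_nonneg_of_forall_setIntegral_nonneg_complex
    (integrable_finsetSum _ fun σ _ => integrable_finsetSum _ fun τ _ => hint σ τ)
    fun E hE => ?_
  have hexpand : ∫ ω in E, ∑ σ ∈ Γ, ∑ τ ∈ Γ, starRingEnd ℂ (c σ) * c τ * φ σ τ ω ∂μ =
      inner ℂ (π.toFun E (∑ σ ∈ Γ, c σ • Z σ)) (∑ τ ∈ Γ, c τ • Z τ) := by
    rw [inner_map_sum_smul_sum_smul, integral_finsetSum _ fun σ _ =>
      (integrable_finsetSum _ fun τ _ => hint σ τ).integrableOn]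
    refine Finset.sum_congr rfl fun σ _ => ?_
    rw [integral_finsetSum _ fun τ _ => (hint σ τ).integrableOn]
    exact Finset.sum_congr rfl fun τ _ => by rw [integral_const_mul, hφ σ τ E hE]
  exact hexpand ▸ π.inner_apply_self_nonneg hE _

/-- Let `π` be an `S`-smooth spectral measure on the Bernoulli space, with numerical
densities `φ_{σ,τ}` satisfying `⟨π(E)Z_σ, Z_τ⟩ = ∫_E φ_{σ,τ} dμ` for measurable `E`.
Then for every `n` and every `ξ ∈ L²(μ)`, the function
`∑_{σ,τ∈Γ_n} conj(⟨Z_σ,ξ⟩)⟨Z_τ,ξ⟩ φ_{σ,τ}` is `≥ 0` μ-a.e., where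
`Γ_n = {σ : σ ⊆ {0,…,n}}`. -/
theorem stmt9 {Ω : Type*} [MeasurableSpace Ω] (μ : Measure Ω) [IsProbabilityMeasure μ]
    (π : SpectralMeasure Ω (Lp ℂ 2 μ))
    (Z : Finset ℕ → Lp ℂ 2 μ) (hZ : Orthonormal ℂ Z)
    (φ : Finset ℕ → Finset ℕ → Ω → ℂ)
    (hφint : ∀ σ τ : Finset ℕ, Integrable (φ σ τ) μ)
    (hφ : ∀ (σ τ : Finset ℕ) (E : Set Ω), MeasurableSet E →
      (inner ℂ (π.toFun E (Z σ)) (Z τ) : ℂ) = ∫ ω in E, φ σ τ ω ∂μ)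
    (n : ℕ) (ξ : Lp ℂ 2 μ) :
    ∀ᵐ ω ∂μ, 0 ≤ ∑ σ ∈ (Finset.range (n + 1)).powerset,
        ∑ τ ∈ (Finset.range (n + 1)).powerset,
          (starRingEnd ℂ) (inner ℂ (Z σ) ξ : ℂ) * (inner ℂ (Z τ) ξ : ℂ) * φ σ τ ω :=
  stmt9_general μ π Z φ hφint hφ n ξ
end

section
/- Let p ≥ 0 and Φ ∈ S_p*. Then for any q > p + 1/2, the spectral integral ∫_Σ Φ dπ₀ with respect to the canonical spectral measure extends to a bounded linear operator from S_q to S_q* with operator norm at most (∑_{σ∈Γ} λ_σ^{-2(q-p)}) · ‖Φ‖_{-p}. -/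
/-!
The bound `|⟨⟨Φ, Z_γ⟩⟩| ≤ λ_γ^p ‖Φ‖_{-p}` together with `λ_{σ△τ}^p ≤ λ_σ^p λ_τ^p`
(as `λ_{σ△τ} ≤ λ_{σ∪τ} λ_{σ∩τ} = λ_σ λ_τ` and `p ≥ 0`) dominates the matrix of `∫_Σ Φ dπ₀` in the
orthonormal bases `λ_σ^{-q} Z_σ` by the rank-one kernel `‖Φ‖_{-p} w_σ w_τ`, where
`w_σ = λ_σ^{-(q-p)}`. By the Euler product `∑_σ λ_σ^{-s} = ∏_k (1 + (1+k)^{-s})`, `w` is square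
summable as soon as `2(q-p) > 1`, and Cauchy–Schwarz bounds any bilinear form with a kernel
dominated by `K w_σ w_τ` by `K ∑_σ w_σ²`.
-/

open scoped BigOperators

/-- `ℓ²`-model of the weighted space `S_q`: the standard basis vector `lp.single 2 σ 1`
corresponds to the orthonormal basis vector `λ_σ^{-q} Z_σ` of `S_q`. -/
noncomputable abbrev Hmodel : Type := lp (fun _ : Finset ℕ => ℂ) 2

open scoped lp

theorem lp.summable_and_tsum_mul_norm_le {ι : Type*} {E : ι → Type*}
    [∀ i, NormedAddCommGroup (E i)] {w : ι → ℝ} (hw0 : ∀ i, 0 ≤ w i)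
    (hw : Summable fun i => w i ^ 2) (x : lp E 2) :
    (Summable fun i => w i * ‖x i‖) ∧ ∑' i, w i * ‖x i‖ ≤ √(∑' i, w i ^ 2) * ‖x‖ := by
  have hx : Summable fun i => ‖x i‖ ^ (2 : ℝ) := by
    simpa using (lp.memℓp x).summable (by norm_num : 0 < (2 : ENNReal).toReal)
  have := Real.summable_and_inner_le_Lp_mul_Lq_tsum_of_nonneg .two_two hw0
    (fun i => norm_nonneg (x i)) (by simpa using hw) hx
  simpa [lp.norm_eq_tsum_rpow (by norm_num : 0 < (2 : ENNReal).toReal), Real.sqrt_eq_rpow]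
    using this

section DominatedMatrix

variable {ι 𝕜 : Type*} [RCLike 𝕜] {M : ι → ι → 𝕜} {w : ι → ℝ} {K : ℝ}

noncomputable def matrixForm (M : ι → ι → 𝕜) (x y : ℓ²(ι, 𝕜)) : 𝕜 :=
  ∑' ij : ι × ι, M ij.1 ij.2 * x ij.1 * y ij.2

theorem summable_and_tsum_norm_le_of_norm_le (hK : 0 ≤ K) (hw0 : ∀ i, 0 ≤ w i)
    (hw : Summable fun i => w i ^ 2) (hM : ∀ i j, ‖M i j‖ ≤ K * (w i * w j))
    (x y : ℓ²(ι, 𝕜)) :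
    (Summable fun ij : ι × ι => ‖M ij.1 ij.2 * x ij.1 * y ij.2‖) ∧
      ∑' ij : ι × ι, ‖M ij.1 ij.2 * x ij.1 * y ij.2‖ ≤ K * (∑' i, w i ^ 2) * ‖x‖ * ‖y‖ := by
  obtain ⟨hx, hx_le⟩ := lp.summable_and_tsum_mul_norm_le hw0 hw x
  obtain ⟨hy, hy_le⟩ := lp.summable_and_tsum_mul_norm_le hw0 hw y
  have hdom : Summable fun ij : ι × ι => K * (w ij.1 * ‖x ij.1‖) * (w ij.2 * ‖y ij.2‖) :=
    (hx.mul_left K).mul_of_nonneg hy (fun i => by have := hw0 i; positivity)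
      (fun j => by have := hw0 j; positivity)
  have hle : ∀ ij : ι × ι, ‖M ij.1 ij.2 * x ij.1 * y ij.2‖ ≤
      K * (w ij.1 * ‖x ij.1‖) * (w ij.2 * ‖y ij.2‖) := fun ⟨i, j⟩ => by
    calc ‖M i j * x i * y j‖ = ‖M i j‖ * ‖x i‖ * ‖y j‖ := by rw [norm_mul, norm_mul]
      _ ≤ K * (w i * w j) * ‖x i‖ * ‖y j‖ := by gcongr; exact hM i j
      _ = K * (w i * ‖x i‖) * (w j * ‖y j‖) := by ring
  have hsum := hdom.of_nonneg_of_le (fun _ => norm_nonneg _) hle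
  have hC : √(∑' i, w i ^ 2) * √(∑' i, w i ^ 2) = ∑' i, w i ^ 2 :=
    Real.mul_self_sqrt (tsum_nonneg fun i => sq_nonneg _)
  refine ⟨hsum, ?_⟩
  calc ∑' ij : ι × ι, ‖M ij.1 ij.2 * x ij.1 * y ij.2‖
      ≤ ∑' ij : ι × ι, K * (w ij.1 * ‖x ij.1‖) * (w ij.2 * ‖y ij.2‖) :=
        hsum.tsum_le_tsum hle hdom
    _ = K * (∑' i, w i * ‖x i‖) * ∑' j, w j * ‖y j‖ := by
        rw [← (hx.mul_left K).tsum_mul_tsum hy hdom, tsum_mul_left]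
    _ ≤ K * (√(∑' i, w i ^ 2) * ‖x‖) * (√(∑' i, w i ^ 2) * ‖y‖) := by
        have : 0 ≤ ∑' j, w j * ‖y j‖ := tsum_nonneg fun j => mul_nonneg (hw0 j) (norm_nonneg _)
        gcongr
    _ = K * (√(∑' i, w i ^ 2) * √(∑' i, w i ^ 2)) * ‖x‖ * ‖y‖ := by ring
    _ = K * (∑' i, w i ^ 2) * ‖x‖ * ‖y‖ := by rw [hC]

theorem summable_matrixForm (hK : 0 ≤ K) (hw0 : ∀ i, 0 ≤ w i)
    (hw : Summable fun i => w i ^ 2) (hM : ∀ i j, ‖M i j‖ ≤ K * (w i * w j))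
    (x y : ℓ²(ι, 𝕜)) :
    Summable fun ij : ι × ι => M ij.1 ij.2 * x ij.1 * y ij.2 :=
  (summable_and_tsum_norm_le_of_norm_le hK hw0 hw hM x y).1.of_norm

theorem matrixForm_single_single [DecidableEq ι] (M : ι → ι → 𝕜) (i j : ι) :
    matrixForm M (lp.single 2 i 1) (lp.single 2 j 1) = M i j := by
  rw [matrixForm, tsum_eq_single (i, j)]
  · simp
  · rintro ⟨i', j'⟩ hne
    by_cases hi : i' = i
    · subst hi
      rw [lp.single_apply_ne 2 j _ fun hj => hne (by rw [← hj]), mul_zero]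
    · rw [lp.single_apply_ne 2 i _ hi, mul_zero, zero_mul]

theorem exists_clm_matrixForm_of_norm_le [DecidableEq ι] (hK : 0 ≤ K) (hw0 : ∀ i, 0 ≤ w i)
    (hw : Summable fun i => w i ^ 2) (hM : ∀ i j, ‖M i j‖ ≤ K * (w i * w j)) :
    ∃ T : ℓ²(ι, 𝕜) →L[𝕜] StrongDual 𝕜 ℓ²(ι, 𝕜),
      (∀ i j, T (lp.single 2 i 1) (lp.single 2 j 1) = M i j) ∧ ‖T‖ ≤ K * ∑' i, w i ^ 2 := by
  have hs := summable_matrixForm hK hw0 hw hM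
  let B : ℓ²(ι, 𝕜) →ₗ[𝕜] ℓ²(ι, 𝕜) →ₗ[𝕜] 𝕜 := LinearMap.mk₂ 𝕜 (matrixForm M)
    (fun x x' y => by
      simp only [matrixForm, lp.coeFn_add, Pi.add_apply, mul_add, add_mul]
      exact (hs x y).tsum_add (hs x' y))
    (fun c x y => by
      simp only [matrixForm, lp.coeFn_smul, Pi.smul_apply, smul_eq_mul, ← tsum_mul_left]
      congr 1; funext; ring)
    (fun x y y' => by
      simp only [matrixForm, lp.coeFn_add, Pi.add_apply, mul_add]
      exact (hs x y).tsum_add (hs x y'))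
    (fun c x y => by
      simp only [matrixForm, lp.coeFn_smul, Pi.smul_apply, smul_eq_mul, ← tsum_mul_left]
      congr 1; funext; ring)
  have hB : ∀ x y, ‖B x y‖ ≤ K * (∑' i, w i ^ 2) * ‖x‖ * ‖y‖ := fun x y =>
    (norm_tsum_le_tsum_norm (summable_and_tsum_norm_le_of_norm_le hK hw0 hw hM x y).1).trans
      (summable_and_tsum_norm_le_of_norm_le hK hw0 hw hM x y).2
  exact ⟨B.mkContinuous₂ _ hB, matrixForm_single_single M,
    LinearMap.mkContinuous₂_norm_le _ (by positivity) hB⟩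

end DominatedMatrix

theorem lam_pos (σ : Finset ℕ) : 0 < lam σ :=
  Finset.prod_pos fun k _ => by positivity

theorem lam_symmDiff_le (σ τ : Finset ℕ) : lam (symmDiff σ τ) ≤ lam σ * lam τ := by
  have h1 : ∀ k : ℕ, (1 : ℝ) ≤ 1 + k := fun k => le_add_of_nonneg_right k.cast_nonneg
  calc lam (symmDiff σ τ) ≤ lam (σ ∪ τ) :=
        Finset.prod_le_prod_of_subset_of_one_le symmDiff_le_sup (fun k _ => by positivity)
          fun k _ _ => h1 k
    _ ≤ lam (σ ∪ τ) * lam (σ ∩ τ) :=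
        le_mul_of_one_le_right (lam_pos _).le (Finset.one_le_prod fun k _ => h1 k)
    _ = lam σ * lam τ := Finset.prod_union_inter

theorem summable_lam_rpow_neg {s : ℝ} (hs : 1 < s) :
    Summable fun σ : Finset ℕ => lam σ ^ (-s) := by
  have hk : Summable fun k : ℕ => ((1 : ℝ) + k) ^ (-s) := by
    refine ((Real.summable_one_div_nat_add_rpow 1 s).mpr hs).congr fun k => ?_
    rw [Real.rpow_neg (by positivity), add_comm, abs_of_nonneg (by positivity), one_div]
  refine (summable_finsetProd_of_summable_nonneg (fun k => by positivity) hk).congr fun σ => ?_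
  exact Real.finsetProd_rpow σ _ (fun k _ => by positivity) (-s)

theorem norm_le_rpow_mul_sqrt_tsum {ι E : Type*} [SeminormedAddCommGroup E] {ℓ : ι → ℝ}
    (hℓ : ∀ i, 0 < ℓ i) (p : ℝ) {a : ι → E}
    (ha : Summable fun i => ℓ i ^ (-(2 * p)) * ‖a i‖ ^ 2) (i : ι) :
    ‖a i‖ ≤ ℓ i ^ p * √(∑' j, ℓ j ^ (-(2 * p)) * ‖a j‖ ^ 2) := by
  have hsq : (ℓ i ^ (-p) * ‖a i‖) ^ 2 = ℓ i ^ (-(2 * p)) * ‖a i‖ ^ 2 := by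
    rw [mul_pow, ← Real.rpow_mul_natCast (hℓ i).le]
    ring_nf
  have hle : ℓ i ^ (-p) * ‖a i‖ ≤ √(∑' j, ℓ j ^ (-(2 * p)) * ‖a j‖ ^ 2) := by
    refine Real.le_sqrt_of_sq_le (hsq ▸ ha.le_tsum i fun j _ => ?_)
    have := (hℓ j).le
    positivity
  calc ‖a i‖ = ℓ i ^ p * (ℓ i ^ (-p) * ‖a i‖) := by
        rw [← mul_assoc, ← Real.rpow_add (hℓ i), add_neg_cancel, Real.rpow_zero, one_mul]
    _ ≤ _ := mul_le_mul_of_nonneg_left hle (Real.rpow_nonneg (hℓ i).le p)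

theorem norm_symmDiff_entry_le {p : ℝ} (hp : 0 ≤ p) {a : Finset ℕ → ℂ}
    (ha : Summable fun γ : Finset ℕ => lam γ ^ (-(2 * p)) * ‖a γ‖ ^ 2) (q : ℝ) (σ τ : Finset ℕ) :
    ‖((lam σ ^ (-q) * lam τ ^ (-q) : ℝ) : ℂ) * a (symmDiff σ τ)‖ ≤
      √(∑' γ, lam γ ^ (-(2 * p)) * ‖a γ‖ ^ 2) * (lam σ ^ (p - q) * lam τ ^ (p - q)) := by
  have hσ := lam_pos σ
  have hτ := lam_pos τ
  have ha_le := norm_le_rpow_mul_sqrt_tsum lam_pos p ha (symmDiff σ τ)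
  have hlam : lam (symmDiff σ τ) ^ p ≤ lam σ ^ p * lam τ ^ p := by
    rw [← Real.mul_rpow hσ.le hτ.le]
    exact Real.rpow_le_rpow (lam_pos _).le (lam_symmDiff_le σ τ) hp
  rw [norm_mul, Complex.norm_real, Real.norm_of_nonneg (by positivity),
    Real.rpow_sub hσ, Real.rpow_sub hτ, Real.rpow_neg hσ.le, Real.rpow_neg hτ.le]
  calc (lam σ ^ q)⁻¹ * (lam τ ^ q)⁻¹ * ‖a (symmDiff σ τ)‖
      ≤ (lam σ ^ q)⁻¹ * (lam τ ^ q)⁻¹ *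
          ((lam σ ^ p * lam τ ^ p) * √(∑' γ, lam γ ^ (-(2 * p)) * ‖a γ‖ ^ 2)) := by
        gcongr
        exact ha_le.trans (mul_le_mul_of_nonneg_right hlam (Real.sqrt_nonneg _))
    _ = _ := by ring

/-- Here `a γ` stands for the Fock coefficient `⟨⟨Φ, Z_γ⟩⟩`, so the square root on the right is
`‖Φ‖_{-p}`, and `T` is `∫_Σ Φ dπ₀` read in the `ℓ²`-models of `S_q` and `S_q*`. -/
theorem stmt15 (p : ℝ) (hp : 0 ≤ p) (a : Finset ℕ → ℂ)
    (ha : Summable (fun γ : Finset ℕ => lam γ ^ (-(2 * p)) * ‖a γ‖ ^ 2))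
    (q : ℝ) (hq : q > p + 1 / 2) :
    ∃ T : Hmodel →L[ℂ] StrongDual ℂ Hmodel,
      (∀ σ τ : Finset ℕ,
        T (lp.single 2 σ (1 : ℂ)) (lp.single 2 τ (1 : ℂ))
          = ((lam σ ^ (-q) * lam τ ^ (-q) : ℝ) : ℂ) * a (symmDiff σ τ)) ∧
      ‖T‖ ≤ (∑' σ : Finset ℕ, lam σ ^ (-(2 * (q - p)))) *
        Real.sqrt (∑' γ : Finset ℕ, lam γ ^ (-(2 * p)) * ‖a γ‖ ^ 2) := by
  have hw_sq : ∀ σ, (lam σ ^ (p - q)) ^ 2 = lam σ ^ (-(2 * (q - p))) := fun σ => by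
    rw [← Real.rpow_mul_natCast (lam_pos σ).le]
    ring_nf
  have hw : Summable fun σ => (lam σ ^ (p - q)) ^ 2 := by
    simpa only [hw_sq] using summable_lam_rpow_neg (by linarith : 1 < 2 * (q - p))
  obtain ⟨T, hT_entry, hT_norm⟩ := exists_clm_matrixForm_of_norm_le (Real.sqrt_nonneg _)
    (fun σ => Real.rpow_nonneg (lam_pos σ).le _) hw (norm_symmDiff_entry_le hp ha q)
  refine ⟨T, hT_entry, ?_⟩
  simpa only [hw_sq, mul_comm] using hT_norm
end
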